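/- Fix compositions α of m and β of n with l = ℓ(α), k = ℓ(β), I = set(α), J = set(β). Then the map Ψ : 𝒜_{α,β} → binom([l+k],k) defined by Ψ(A) := std_{(I #_A J) ⊔ {z_A} ⊔ {m+n}}(J̃_A) is injective. -/

import Mathlib

namespace QSymPaper

attribute [local instance 0] Classical.propDecidable

noncomputable section

/-- A composition condition: all parts are positive. -/
def IsComp (α : List ℕ) : Prop := ∀ a ∈ α, 0 < a

/-- `set(α)`: the set of proper partial sums of `α`. -/
def setComp (α : List ℕ) : Finset ℕ :=
  (Finset.range (α.length - 1)).image (fun j => (α.take (j + 1)).sum)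

/-- `comp(S)` for `S ⊆ [n−1]`: the composition of `n` whose set of partial sums is `S`. -/
def compOf (n : ℕ) (S : Finset ℕ) : List ℕ :=
  if n = 0 then []
  else
    let l := S.sort (· ≤ ·) ++ [n]
    List.zipWith (fun a b => a - b) l (0 :: l)

/-- Monomial quasisymmetric function `M_α`, in the variables of the sub-alphabet `P`. -/
def Mqs (σ : Type) [LinearOrder σ] (F : Type) [CommRing F] (P : σ → Prop) (α : List ℕ) :
    MvPowerSeries σ F :=
  fun (d : σ →₀ ℕ) => if (∀ i ∈ d.support, P i) ∧ (d.support.sort (· ≤ ·)).map (fun i => d i) = α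
    then 1 else 0

/-- Fundamental quasisymmetric function `L_{comp(S)}` (for `S ⊆ [n−1]`). -/
def Lqs (σ : Type) [LinearOrder σ] (F : Type) [CommRing F] (P : σ → Prop)
    (n : ℕ) (S : Finset ℕ) : MvPowerSeries σ F :=
  ∑ T ∈ (Finset.Icc 1 (n - 1)).powerset.filter (fun T => S ⊆ T), Mqs σ F P (compOf n T)

/-- The weight `wt_I(i) = |[1,i−1] ∩ I| + 1`. -/
def wt (I : Finset ℕ) (i : ℕ) : ℕ := (Finset.Icc 1 (i - 1) ∩ I).card + 1

/-- `A∁ = [N] ∖ A`. -/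
def coSet (N : ℕ) (A : Finset ℕ) : Finset ℕ := Finset.Icc 1 N \ A

/-- `e(A)`: right endpoints of the maximal intervals of `A`, except `N`. -/
def eSet (N : ℕ) (A : Finset ℕ) : Finset ℕ := (A.filter (fun b => b + 1 ∉ A)).erase N

/-- `ē(A) = e(A) ∪ e(A∁)`. -/
def ebar (N : ℕ) (A : Finset ℕ) : Finset ℕ := eSet N A ∪ eSet N (coSet N A)

/-- `T_S`: the image of `T ⊆ [|S|]` under the increasing enumeration of `S` (1-based). -/
def embedIn (S T : Finset ℕ) : Finset ℕ :=
  T.image (fun t => (S.sort (· ≤ ·)).getD (t - 1) 0)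

/-- `std_S(T)`: ranks within `S` of the elements of `T ⊆ S`. -/
def stdSet (S T : Finset ℕ) : Finset ℕ :=
  T.image (fun t => (S.filter (· ≤ t)).card)

/-- `I #_A J := I_{A∁} ⊔ J_A`. -/
def hashAJ (N : ℕ) (A I J : Finset ℕ) : Finset ℕ :=
  embedIn (coSet N A) I ∪ embedIn A J

/-- `I ⧢_A J := e(A) ⊔ ((I #_A J) ∖ ē(A))`. -/
def shSet (N : ℕ) (A I J : Finset ℕ) : Finset ℕ :=
  eSet N A ∪ (hashAJ N A I J \ ebar N A)

/-- The `i`-th entry (1-based) of the word `w`. -/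
def wordEntry (w : List ℕ) (i : ℕ) : ℕ := w.getD (i - 1) 0

/-- The descent set of the word `w`. -/
def wordDes (w : List ℕ) : Finset ℕ :=
  (Finset.Icc 1 (w.length - 1)).filter (fun i => wordEntry w (i + 1) < wordEntry w i)

/-- `u ⧢_A v`: the word of length `N` whose subword in positions `A` is `v`
and whose subword in the complementary positions is `u`. -/
def shWord (N : ℕ) (u v : List ℕ) (A : Finset ℕ) : List ℕ :=
  (List.range N).map (fun p0 =>
    if p0 + 1 ∈ A then v.getD ((A.filter (· ≤ p0 + 1)).card - 1) 0
    else u.getD (((coSet N A).filter (· ≤ p0 + 1)).card - 1) 0)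

/-- `v[m]`: the `m`-shifted word. -/
def shiftWord (m : ℕ) (v : List ℕ) : List ℕ := v.map (· + m)

/-- `u` is (the word of) a permutation in `S_m`. -/
def IsPermWord (m : ℕ) (u : List ℕ) : Prop := u.Perm (List.range' 1 m)

/-- `z_A`. -/
def zA (N : ℕ) (A : Finset ℕ) : ℕ :=
  if N ∈ A then (coSet N A).max.unbotD 0 else A.max.unbotD 0

/-- `J̃_A`. -/
def Jtilde (N : ℕ) (A J : Finset ℕ) : Finset ℕ :=
  if N ∈ A then insert N (embedIn A J) else insert (zA N A) (embedIn A J)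

/-- `𝒜_{α,β}` (as a set of subsets of `[m+n]`, where `I = set α`, `J = set β`). -/
def calA (m n : ℕ) (I J : Finset ℕ) : Finset (Finset ℕ) :=
  ((Finset.Icc 1 (m + n)).powersetCard n).filter
    (fun A => ebar (m + n) A \ {zA (m + n) A} ⊆ hashAJ (m + n) A I J)

/-- `Ψ(A) = std_{(I #_A J) ⊔ {z_A} ⊔ {m+n}}(J̃_A)`. -/
def Psi (m n : ℕ) (I J : Finset ℕ) (A : Finset ℕ) : Finset ℕ :=
  stdSet (insert (m + n) (insert (zA (m + n) A) (hashAJ (m + n) A I J)))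
    (Jtilde (m + n) A J)

/-- `α ⧢_D β`: the shuffle of the compositions `α` and `β` whose `β`-entries occupy `D`. -/
def shComp (α β : List ℕ) (D : Finset ℕ) : List ℕ :=
  shWord (α.length + β.length) α β D

/-- `Σ(α,β,D,i)`: the sum of the first `d_i − 1` entries of `α ⧢_D β`. -/
def psum (α β : List ℕ) (D : Finset ℕ) (i : ℕ) : ℕ :=
  ((shComp α β D).take ((D.sort (· ≤ ·)).getD (i - 1) 0 - 1)).sum

/-- `Φ(D)`. -/
def Phi (α β : List ℕ) (D : Finset ℕ) : Finset ℕ :=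
  (Finset.Icc 1 β.length).biUnion (fun i =>
    Finset.Icc (psum α β D i + 1) (psum α β D i + β.getD (i - 1) 0))

/-- The index set for two-way overlapping shuffles of `α` and `β`: triples `(D, S₁, S₂)`
where `D` records the shuffle, `S₁` the positions of `+₁` (an `α`-entry immediately
followed by a `β`-entry) and `S₂` the positions of `+₂`. -/
def twoWayIdx (α β : List ℕ) : Finset (Finset ℕ × Finset ℕ × Finset ℕ) :=
  (((Finset.Icc 1 (α.length + β.length)).powersetCard β.length) ×ˢ
    ((Finset.Icc 1 (α.length + β.length - 1)).powerset ×ˢ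
      (Finset.Icc 1 (α.length + β.length - 1)).powerset)).filter
    (fun x => (∀ p ∈ x.2.1, p ∉ x.1 ∧ p + 1 ∈ x.1) ∧ (∀ p ∈ x.2.2, p ∈ x.1 ∧ p + 1 ∉ x.1))

/-- `γ⁺`: the composition obtained from the two-way overlapping shuffle `(D,S₁,S₂)`
by carrying out the marked additions. -/
def plusComp (α β : List ℕ) (D S₁ S₂ : Finset ℕ) : List ℕ :=
  compOf (α.sum + β.sum)
    (((Finset.Icc 1 (α.length + β.length - 1)) \ (S₁ ∪ S₂)).image
      (fun p => ((shComp α β D).take p).sum))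

/-- `D_α(q,t)`. -/
def Dqt (σ : Type) [LinearOrder σ] (F : Type) [Field F] (P : σ → Prop) (q t : F)
    (α : List ℕ) : MvPowerSeries σ F :=
  if α = [] then 1
  else ∑ T ∈ (setComp α).powerset,
    (q ^ ((T.card + 1 : ℤ) - (α.sum : ℤ)) * (-t) ^ (α.length - (T.card + 1))) •
      Mqs σ F P (compOf α.sum T)

/-- Enriched monomial quasisymmetric function with generic weight `c`
(`c = 2` gives `η_α`, `c = q+1` gives `η_α^{(q)}`). -/
def etaQ (σ : Type) [LinearOrder σ] (F : Type) [CommRing F] (P : σ → Prop) (c : F)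
    (α : List ℕ) : MvPowerSeries σ F :=
  if α = [] then 1
  else ∑ T ∈ (setComp α).powerset, (c ^ (T.card + 1)) • Mqs σ F P (compOf α.sum T)

/-- `K_{comp(J)}(ν)` (for `J ⊆ [n−1]`, `n ≥ 1`). -/
def Kset (σ : Type) [LinearOrder σ] (P : σ → Prop) (ν : ℤ) (n : ℕ) (J : Finset ℕ) :
    MvPowerSeries σ ℂ :=
  ((ν : ℂ) ^ (-((n : ℤ) - 1))) •
    ∑ I ∈ (Finset.Icc 1 (n - 1)).powerset,
      ((-1 : ℂ) ^ ((J \ I).card) *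
        ((ν : ℂ) - 1) ^ ((Finset.Icc 1 (n - 1) \ (I ∪ J)).card)) • Lqs σ ℂ P n I

/-- `K_α(ν)` for a composition `α`. -/
def Kcomp (σ : Type) [LinearOrder σ] (P : σ → Prop) (ν : ℤ) (α : List ℕ) :
    MvPowerSeries σ ℂ :=
  if α = [] then 1 else Kset σ P ν α.sum (setComp α)

/-- The quasisymmetric Hall–Littlewood function `G_I(q)` (for `I ⊆ [n−1]`),
with `q = RatFunc.X`. -/
def Gq (σ : Type) [LinearOrder σ] (P : σ → Prop) (n : ℕ) (I : Finset ℕ) :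
    MvPowerSeries σ (RatFunc ℂ) :=
  ∑ J ∈ (Finset.Icc 1 (n - 1)).powerset.filter (fun J => I ⊆ J),
    ((-1 : RatFunc ℂ) ^ ((J \ I).card) * RatFunc.X ^ (∑ i ∈ J \ I, wt I i)) •
      Lqs σ (RatFunc ℂ) P n J

/-- `G_γ(q)` for a composition `γ`. -/
def Gcomp (σ : Type) [LinearOrder σ] (P : σ → Prop) (γ : List ℕ) :
    MvPowerSeries σ (RatFunc ℂ) :=
  if γ = [] then 1 else Gq σ P γ.sum (setComp γ)

/-- The `q`-monomial quasisymmetric function `M_{comp(I)}(q)` (for `I ⊆ [n−1]`). -/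
def MqF (σ : Type) [LinearOrder σ] (P : σ → Prop) (n : ℕ) (I : Finset ℕ) :
    MvPowerSeries σ (RatFunc ℂ) :=
  ∑ T ∈ (Finset.Icc 1 (n - 1)).powerset.filter (fun T => I ⊆ T),
    ((-RatFunc.X : RatFunc ℂ) ^ (T.card - I.card)) • Lqs σ (RatFunc ℂ) P n T

/-- `M_γ(q)` for a composition `γ`. -/
def Mqcomp (σ : Type) [LinearOrder σ] (P : σ → Prop) (γ : List ℕ) :
    MvPowerSeries σ (RatFunc ℂ) :=
  if γ = [] then 1 else MqF σ P γ.sum (setComp γ)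

/-- `P_w`: positions of the nonzero entries of `w`. -/
def Pset (w : List ℕ) : Finset ℕ :=
  (Finset.Icc 1 w.length).filter (fun i => wordEntry w i ≠ 0)

/-- Standardized descent set `sDes(w)`. -/
def sDes (w : List ℕ) : Finset ℕ := (stdSet (Pset w) (wordDes w)).erase (Pset w).card

def wLe (m : ℕ) (w : List ℕ) : List ℕ := w.filter (fun a => decide (a ≤ m))
def wGt (m : ℕ) (w : List ℕ) : List ℕ := (w.filter (fun a => decide (m < a))).map (· - m)
def wLe0 (m : ℕ) (w : List ℕ) : List ℕ := w.map (fun a => if a ≤ m then a else 0)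
def wGt0 (m : ℕ) (w : List ℕ) : List ℕ := w.map (fun a => if a ≤ m then 0 else a)

/-- 1-based position of `a` in the list `l`. -/
def posIn (l : List ℕ) (a : ℕ) : ℕ := l.idxOf a + 1

/-- The standardized `q`-weight `sw^w_m`. -/
def swq (m : ℕ) (w : List ℕ) (i : ℕ) : RatFunc ℂ :=
  if wordEntry w i ≤ m ∧ wordEntry w (i + 1) ≤ m then
    RatFunc.X ^ wt (wordDes (wLe m w)) (posIn (wLe m w) (wordEntry w i))
  else if m < wordEntry w i ∧ m < wordEntry w (i + 1) then
    RatFunc.X ^ wt (wordDes (wGt m w)) (posIn (wGt m w) (wordEntry w i - m))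
  else 0

/-- `c_q(u,v) = (1−q^u)(1−q^{u−1})⋯(1−q^{u−v+1})`. -/
def cq (u v : ℕ) : RatFunc ℂ := ∏ j ∈ Finset.range v, (1 - RatFunc.X ^ (u - j))

/-- The `t`-th smallest element of `I` (1-based). -/
def nthElt (I : Finset ℕ) (t : ℕ) : ℕ := (I.sort (· ≤ ·)).getD (t - 1) 0

/-- `Bre(I,J)_t`. -/
def bre (I J : Finset ℕ) (t : ℕ) : ℕ :=
  if t = 0 then 0 else (J.filter (· ≤ nthElt I t)).card

/-- `s(I,J)`. -/
def sIJ (I J : Finset ℕ) : ℕ :=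
  ∑ t ∈ Finset.Icc 1 I.card, t * (bre I J t - bre I J (t - 1) - 1)

/-- `Bre(I,J)` as a set. -/
def breSet (I J : Finset ℕ) : Finset ℕ := (Finset.Icc 1 I.card).image (bre I J)

/-- `g(I,J)`. -/
def gIJ (I J : Finset ℕ) : ℕ := ∑ k ∈ Finset.Icc 1 J.card \ breSet I J, k

/-- Near-concatenation `α ⊙ β`. -/
def nearConcat : List ℕ → List ℕ → List ℕ
  | [], β => β
  | α, [] => α
  | α, b :: βs => α.dropLast ++ (α.getLast?.getD 0 + b) :: βs

/-- The field `ℂ(q,t)`. -/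
abbrev Fqt : Type := FractionRing (MvPolynomial (Fin 2) ℂ)

/-- The variable `q` of `ℂ(q,t)`. -/
def qv : Fqt := algebraMap (MvPolynomial (Fin 2) ℂ) Fqt (MvPolynomial.X 0)

/-- The variable `t` of `ℂ(q,t)`. -/
def tv : Fqt := algebraMap (MvPolynomial (Fin 2) ℂ) Fqt (MvPolynomial.X 1)

/-- The combined two-alphabet variable set, every `x`-variable smaller
than every `y`-variable. -/
abbrev Sig2 : Type := ℕ ⊕ₗ ℕ

/-- The full alphabet. -/
def PTot : Sig2 → Prop := fun _ => True

/-- The first (`x`) alphabet. -/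
def PLft : Sig2 → Prop := fun s => (ofLex s).isLeft = true

/-- The second (`y`) alphabet. -/
def PRgt : Sig2 → Prop := fun s => (ofLex s).isRight = true

/-!
Put `T = (J ⊔ {n})_A` and `U = (I ⊔ {m})_{A∁}`. If `α` and `β` are nonempty, one of `max A`,
`max A∁` is `m + n` and the other is `z_A`, so `J̃_A = T` and
`(I #_A J) ⊔ {z_A} ⊔ {m + n} = T ⊔ U =: S`; thus `Ψ(A)` records which of the `l + k` elements
of `S` lie in `A`. The condition defining `𝒜_{α,β}` forces every maximal interval of `A` to
end in `T` and every maximal interval of `A∁` to end in `U`. Hence the stretch of `[m + n]`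
between consecutive elements of `S` lies entirely in `A` or entirely in `A∁`, and counting shows
that the `j`-th element of `S` is the sum of the first `r` parts of `β` and the first `j - r`
parts of `α`, where `r = |Ψ(A) ∩ [j]|`. So `Ψ(A)` determines `S`, which elements of `S` lie in
`A`, and finally `A` itself: `p ∈ A` iff the first element of `S` at or after `p` lies in `A`.
-/

section Rank

open Finset

variable {C D S T U W : Finset ℕ} {i s x y N : ℕ}

def rankIn (C : Finset ℕ) (x : ℕ) : ℕ := (C.filter (· ≤ x)).card

lemma rankIn_mono : Monotone (rankIn C) := fun _ _ h =>
  card_le_card (monotone_filter_right C (fun _ _ hx => hx.trans h))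

lemma rankIn_le_card : rankIn C x ≤ C.card := card_filter_le _ _

lemma rankIn_lt_rankIn (hy : y ∈ C) (hxy : x < y) : rankIn C x < rankIn C y :=
  card_lt_card ⟨monotone_filter_right C (fun _ _ ha => ha.trans hxy.le),
    fun hsub => (mem_filter.1 (hsub (mem_filter.2 ⟨hy, le_rfl⟩))).2.not_gt hxy⟩

lemma rankIn_pos (hx : x ∈ C) : 0 < rankIn C x := card_pos.2 ⟨x, mem_filter.2 ⟨hx, le_rfl⟩⟩

lemma strictMonoOn_rankIn : StrictMonoOn (rankIn C) C := fun _ _ _ hy => rankIn_lt_rankIn hy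

lemma rankIn_orderEmbOfFin (j : Fin C.card) : rankIn C (C.orderEmbOfFin rfl j) = j + 1 := by
  have : C.filter (· ≤ C.orderEmbOfFin rfl j) =
      (Iic j).map (C.orderEmbOfFin rfl).toEmbedding := by
    ext x
    simp only [mem_filter, mem_map, mem_Iic, RelEmbedding.coe_toEmbedding]
    constructor
    · rintro ⟨hx, hxj⟩
      rw [← mem_coe, ← range_orderEmbOfFin C rfl] at hx
      obtain ⟨i, rfl⟩ := hx
      exact ⟨i, (OrderEmbedding.le_iff_le _).1 hxj, rfl⟩
    · rintro ⟨i, hij, rfl⟩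
      exact ⟨orderEmbOfFin_mem C rfl i, (OrderEmbedding.le_iff_le _).2 hij⟩
  rw [rankIn, this, card_map, Fin.card_Iic]

lemma nthElt_eq_orderEmbOfFin (h1 : 1 ≤ i) (h2 : i ≤ C.card) :
    nthElt C i = C.orderEmbOfFin rfl ⟨i - 1, by omega⟩ := by
  rw [nthElt, orderEmbOfFin_apply, List.getD_eq_getElem _ _ (by simp; omega)]
  rfl

lemma nthElt_mem (h1 : 1 ≤ i) (h2 : i ≤ C.card) : nthElt C i ∈ C := by
  rw [nthElt_eq_orderEmbOfFin h1 h2]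
  exact orderEmbOfFin_mem C rfl _

lemma rankIn_nthElt (h1 : 1 ≤ i) (h2 : i ≤ C.card) : rankIn C (nthElt C i) = i := by
  rw [nthElt_eq_orderEmbOfFin h1 h2, rankIn_orderEmbOfFin]
  simp only
  omega

lemma nthElt_card (h : C.Nonempty) : nthElt C C.card = C.max' h := by
  rw [nthElt_eq_orderEmbOfFin (card_pos.2 h) le_rfl, orderEmbOfFin_last rfl (card_pos.2 h)]

lemma nthElt_rankIn (hx : x ∈ C) : nthElt C (rankIn C x) = x := by
  rw [← mem_coe, ← range_orderEmbOfFin C rfl] at hx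
  obtain ⟨j, rfl⟩ := hx
  rw [rankIn_orderEmbOfFin, nthElt_eq_orderEmbOfFin (by omega) (by omega)]
  simp

lemma embedIn_eq_image : embedIn C D = D.image (nthElt C) := rfl

lemma mem_embedIn (hD : D ⊆ Icc 1 C.card) : x ∈ embedIn C D ↔ x ∈ C ∧ rankIn C x ∈ D := by
  rw [embedIn_eq_image]
  constructor
  · intro hx
    obtain ⟨d, hd, rfl⟩ := mem_image.1 hx
    obtain ⟨h1, h2⟩ := mem_Icc.1 (hD hd)
    exact ⟨nthElt_mem h1 h2, by rwa [rankIn_nthElt h1 h2]⟩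
  · rintro ⟨hx, hr⟩
    exact mem_image.2 ⟨rankIn C x, hr, nthElt_rankIn hx⟩

lemma embedIn_subset (hD : D ⊆ Icc 1 C.card) : embedIn C D ⊆ C :=
  fun _ hx => ((mem_embedIn hD).1 hx).1

lemma card_embedIn (hD : D ⊆ Icc 1 C.card) : (embedIn C D).card = D.card := by
  refine card_image_of_injOn fun i hi j hj hij => ?_
  obtain ⟨hi1, hi2⟩ := mem_Icc.1 (hD hi)
  obtain ⟨hj1, hj2⟩ := mem_Icc.1 (hD hj)
  rw [← rankIn_nthElt hi1 hi2, ← rankIn_nthElt hj1 hj2]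
  exact congrArg (rankIn C) hij

lemma image_rankIn_embedIn (hD : D ⊆ Icc 1 C.card) : (embedIn C D).image (rankIn C) = D := by
  ext d
  refine ⟨fun hd => ?_, fun hd => ?_⟩
  · obtain ⟨x, hx, rfl⟩ := mem_image.1 hd
    exact ((mem_embedIn hD).1 hx).2
  · obtain ⟨h1, h2⟩ := mem_Icc.1 (hD hd)
    exact mem_image.2 ⟨nthElt C d, mem_image_of_mem _ hd, rankIn_nthElt h1 h2⟩

lemma rankIn_image {f : ℕ → ℕ} {X : Set ℕ} (hf : StrictMonoOn f X) (hW : ↑W ⊆ X)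
    (hx : x ∈ X) :
    rankIn (W.image f) (f x) = rankIn W x := by
  have hfilter : (W.image f).filter (· ≤ f x) = (W.filter (· ≤ x)).image f := by
    rw [filter_image]
    exact congrArg _ (filter_congr fun w hw => hf.le_iff_le (hW hw) hx)
  rw [rankIn, hfilter,
    card_image_of_injOn (hf.injOn.mono fun w hw => hW (mem_filter.1 hw).1)]
  rfl

lemma rankIn_image_rankIn (hW : W ⊆ S) (hs : s ∈ S) :
    rankIn (W.image (rankIn S)) (rankIn S s) = rankIn W s :=
  rankIn_image strictMonoOn_rankIn (coe_subset.2 hW) hs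

lemma rankIn_mem_image_rankIn_iff (hT : T ⊆ S) (hs : s ∈ S) :
    rankIn S s ∈ T.image (rankIn S) ↔ s ∈ T :=
  ⟨fun h => by
    obtain ⟨t, ht, he⟩ := mem_image.1 h
    exact strictMonoOn_rankIn.injOn (hT ht) hs he ▸ ht, mem_image_of_mem _⟩

lemma rankIn_union (h : Disjoint T U) : rankIn (T ∪ U) s = rankIn T s + rankIn U s := by
  rw [rankIn, filter_union, card_union_of_disjoint (disjoint_filter_filter h)]
  rfl

lemma rankIn_Icc_one (hs : s ≤ N) : rankIn (Icc 1 N) s = s := by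
  have : (Icc 1 N).filter (· ≤ s) = Icc 1 s := by
    ext x
    simp only [mem_filter, mem_Icc]
    omega
  rw [rankIn, this, Nat.card_Icc, Nat.add_sub_cancel]

lemma rankIn_add_rankIn_coSet (hC : C ⊆ Icc 1 N) (hs : s ≤ N) :
    rankIn C s + rankIn (coSet N C) s = s := by
  rw [coSet, ← rankIn_union disjoint_sdiff, union_sdiff_of_subset hC, rankIn_Icc_one hs]

end Rank

section PartialSums

open Finset

variable {γ : List ℕ} {i j : ℕ}

def partialSum (γ : List ℕ) (i : ℕ) : ℕ := (γ.take i).sum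

def partialSums (γ : List ℕ) : Finset ℕ := (Icc 1 γ.length).image (partialSum γ)

lemma partialSum_zero : partialSum γ 0 = 0 := by simp [partialSum]

lemma partialSum_le_sum : partialSum γ i ≤ γ.sum :=
  (List.take_sublist i γ).sum_le_sum fun _ _ => Nat.zero_le _

lemma partialSum_lt_partialSum (hγ : IsComp γ) (hij : i < j) (hj : j ≤ γ.length) :
    partialSum γ i < partialSum γ j := by
  have hi : i < γ.length := by omega
  calc partialSum γ i < partialSum γ i + γ[i] :=
        Nat.lt_add_of_pos_right (hγ _ (List.getElem_mem hi))
    _ = partialSum γ (i + 1) := (List.sum_take_succ γ i hi).symm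
    _ ≤ partialSum γ j := List.monotone_sum_take γ hij

lemma strictMonoOn_partialSum (hγ : IsComp γ) :
    StrictMonoOn (partialSum γ) (Set.Iic γ.length) :=
  fun _ _ _ hj hij => partialSum_lt_partialSum hγ hij hj

lemma partialSums_subset (hγ : IsComp γ) : partialSums γ ⊆ Icc 1 γ.sum := by
  intro x hx
  obtain ⟨i, hi, rfl⟩ := mem_image.1 hx
  obtain ⟨h1, h2⟩ := mem_Icc.1 hi
  exact mem_Icc.2 ⟨partialSum_zero.symm.trans_lt (partialSum_lt_partialSum hγ h1 h2),
    partialSum_le_sum⟩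

lemma partialSums_eq_insert (h : γ ≠ []) : partialSums γ = insert γ.sum (setComp γ) := by
  have hlen : 0 < γ.length := List.length_pos_iff.2 h
  have hIcc : Icc 1 γ.length = insert γ.length ((range (γ.length - 1)).image (· + 1)) := by
    ext i
    simp only [mem_Icc, mem_insert, mem_image, mem_range]
    constructor
    · intro hi
      rcases eq_or_lt_of_le hi.2 with h | h
      · exact Or.inl h
      · exact Or.inr ⟨i - 1, by omega, by omega⟩
    · rintro (rfl | ⟨j, hj, rfl⟩) <;> omega
  rw [partialSums, hIcc, image_insert, image_image, partialSum, List.take_length]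
  rfl

lemma card_partialSums (hγ : IsComp γ) : (partialSums γ).card = γ.length := by
  rw [partialSums, card_image_of_injOn, Nat.card_Icc, Nat.add_sub_cancel]
  exact (strictMonoOn_partialSum hγ).injOn.mono fun i hi => (mem_Icc.1 hi).2

lemma rankIn_partialSums (hγ : IsComp γ) (hi : i ≤ γ.length) :
    rankIn (partialSums γ) (partialSum γ i) = i := by
  rw [partialSums, rankIn_image (strictMonoOn_partialSum hγ) (fun j hj => (mem_Icc.1 hj).2) hi,
    rankIn_Icc_one hi]

end PartialSums

section Intervals

open Finset

variable {C S W : Finset ℕ} {a p s N : ℕ}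

def IntervalsEndIn (C W : Finset ℕ) : Prop := ∀ b ∈ C, b + 1 ∉ C → b ∈ W

lemma exists_intervalEnd (ha : a ∈ C) : ∃ b, a ≤ b ∧ b + 1 ∉ C ∧ Icc a b ⊆ C := by
  have hex : ∃ d, a + d + 1 ∉ C := ⟨C.sup id, fun h => by
    have := le_sup (f := id) h
    simp only [id] at this
    omega⟩
  refine ⟨a + Nat.find hex, Nat.le_add_right _ _, Nat.find_spec hex, fun x hx => ?_⟩
  obtain ⟨hax, hxb⟩ := mem_Icc.1 hx
  obtain rfl | hax := eq_or_lt_of_le hax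
  · exact ha
  · have := Nat.find_min hex (m := x - a - 1) (by omega)
    rwa [not_not, show a + (x - a - 1) + 1 = x by omega] at this

lemma exists_mem_between_of_intervalsEndIn (hend : IntervalsEndIn C W) (hs : s ∈ C → s ∈ W)
    (ha : a ∈ C) (has : a ≤ s) : ∃ w ∈ W, a ≤ w ∧ w ≤ s := by
  obtain ⟨b, hab, hb, hIcc⟩ := exists_intervalEnd ha
  by_cases hbs : b ≤ s
  · exact ⟨b, hend b (hIcc (right_mem_Icc.2 hab)) hb, hab, hbs⟩
  · exact ⟨s, hs (hIcc (mem_Icc.2 ⟨has, by omega⟩)), has, le_rfl⟩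

lemma mem_iff_exists_first_mem (hend : IntervalsEndIn C S)
    (hendc : IntervalsEndIn (coSet N C) S) (hp : p ∈ Icc 1 N) :
    p ∈ C ↔ ∃ t ∈ S, t ∈ C ∧ p ≤ t ∧ ∀ s ∈ S, p ≤ s → t ≤ s := by
  constructor
  · intro hpC
    obtain ⟨b, hpb, hb, hIcc⟩ := exists_intervalEnd hpC
    have hbS : b ∈ S.filter (p ≤ ·) := mem_filter.2 ⟨hend b (hIcc (right_mem_Icc.2 hpb)) hb, hpb⟩
    obtain ⟨htS, hpt⟩ := mem_filter.1 (min'_mem _ ⟨b, hbS⟩)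
    exact ⟨_, htS, hIcc (mem_Icc.2 ⟨hpt, min'_le _ _ hbS⟩), hpt,
      fun s hs hps => min'_le _ _ (mem_filter.2 ⟨hs, hps⟩)⟩
  · rintro ⟨t, -, htC, hpt, hfirst⟩
    by_contra hpC
    obtain ⟨b, hpb, hb, hIcc⟩ := exists_intervalEnd (mem_sdiff.2 ⟨hp, hpC⟩ : p ∈ coSet N C)
    have hbS := hendc b (hIcc (right_mem_Icc.2 hpb)) hb
    exact (mem_sdiff.1 (hIcc (mem_Icc.2 ⟨hpt, hfirst b hbS hpb⟩))).2 htC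

end Intervals

section BlockEnds

open Finset

variable {γ : List ℕ} {C : Finset ℕ} {s : ℕ}

/-- Cutting `C` into consecutive blocks of sizes `γ₁, …, γ_ℓ`, the last elements of the blocks;
for `C = A` and `γ = β` this is `J_A ⊔ {max A}`. -/
def blockEnds (γ : List ℕ) (C : Finset ℕ) : Finset ℕ := embedIn C (partialSums γ)

lemma blockEnds_subset (hγ : IsComp γ) (hC : C.card = γ.sum) : blockEnds γ C ⊆ C :=
  embedIn_subset (hC ▸ partialSums_subset hγ)

lemma card_blockEnds (hγ : IsComp γ) (hC : C.card = γ.sum) : (blockEnds γ C).card = γ.length := by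
  rw [blockEnds, card_embedIn (hC ▸ partialSums_subset hγ), card_partialSums hγ]

lemma blockEnds_eq_insert (hγ : γ ≠ []) (hne : C.Nonempty) (hC : C.card = γ.sum) :
    blockEnds γ C = insert (C.max' hne) (embedIn C (setComp γ)) := by
  rw [blockEnds, partialSums_eq_insert hγ, embedIn_eq_image, image_insert, ← hC, nthElt_card hne]
  rfl

lemma rankIn_eq_partialSum_of_mem_blockEnds (hγ : IsComp γ) (hC : C.card = γ.sum)
    (hs : s ∈ blockEnds γ C) : rankIn C s = partialSum γ (rankIn (blockEnds γ C) s) := by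
  have hD : partialSums γ ⊆ Icc 1 C.card := hC ▸ partialSums_subset hγ
  obtain ⟨hsC, hr⟩ := (mem_embedIn hD).1 hs
  obtain ⟨i, hi, hi'⟩ := mem_image.1 hr
  rw [blockEnds, ← rankIn_image_rankIn (embedIn_subset hD) hsC, image_rankIn_embedIn hD, ← hi',
    rankIn_partialSums hγ (mem_Icc.1 hi).2]

lemma rankIn_eq_partialSum (hγ : IsComp γ) (hC : C.card = γ.sum)
    (hend : IntervalsEndIn C (blockEnds γ C)) (hs : s ∈ C → s ∈ blockEnds γ C) :
    rankIn C s = partialSum γ (rankIn (blockEnds γ C) s) := by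
  set W := blockEnds γ C
  have hbetween := fun a (ha : a ∈ C) => exists_mem_between_of_intervalsEndIn hend hs ha
  obtain hi | hi := Nat.eq_zero_or_pos (rankIn W s)
  · rw [hi, partialSum_zero, rankIn, card_eq_zero, filter_eq_empty_iff]
    intro a ha has
    obtain ⟨w, hw, -, hws⟩ := hbetween a ha has
    exact (rankIn_pos hw).not_ge (hi ▸ rankIn_mono hws)
  · set t := nthElt W (rankIn W s)
    have ht : t ∈ W := nthElt_mem hi rankIn_le_card
    have hrt : rankIn W t = rankIn W s := rankIn_nthElt hi rankIn_le_card
    have hts : t ≤ s := not_lt.1 fun h => (rankIn_lt_rankIn ht h).ne hrt.symm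
    have hCst : rankIn C s = rankIn C t := by
      refine le_antisymm (card_le_card fun a ha => ?_) (rankIn_mono hts)
      obtain ⟨haC, has⟩ := mem_filter.1 ha
      obtain ⟨w, hw, haw, hws⟩ := hbetween a haC has
      have hwt : w ≤ t := (strictMonoOn_rankIn.le_iff_le hw ht).1 (hrt ▸ rankIn_mono hws)
      exact mem_filter.2 ⟨haC, haw.trans hwt⟩
    rw [hCst, rankIn_eq_partialSum_of_mem_blockEnds hγ hC ht, hrt]

end BlockEnds

section Reconstruction

open Finset

variable {α β : List ℕ} {C : Finset ℕ}

lemma card_coSet {a b : ℕ} (hC : C ⊆ Icc 1 (a + b)) (hCcard : C.card = b) :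
    (coSet (a + b) C).card = a := by
  rw [coSet, card_sdiff_of_subset hC, Nat.card_Icc, hCcard]
  omega

/-- The end of the `j`-th block of a shuffle of the blocks of `α` and `β` in which `P` marks the
positions of the `β`-blocks: `rankIn P j` of the first `j` blocks come from `β`, the other
`j - rankIn P j` from `α`. -/
def cutPoint (α β : List ℕ) (P : Finset ℕ) (j : ℕ) : ℕ :=
  partialSum β (rankIn P j) + partialSum α (j - rankIn P j)

def cutPoints (α β : List ℕ) (P : Finset ℕ) : Finset ℕ :=
  (Icc 1 (α.length + β.length)).image (cutPoint α β P)

def unPsi (α β : List ℕ) (P : Finset ℕ) : Finset ℕ :=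
  (Icc 1 (α.sum + β.sum)).filter fun p => ∃ t ∈ cutPoints α β P,
    rankIn (cutPoints α β P) t ∈ P ∧ p ≤ t ∧ ∀ s ∈ cutPoints α β P, p ≤ s → t ≤ s

lemma cutPoint_rankIn (hα : IsComp α) (hβ : IsComp β)
    (hC : C ⊆ Icc 1 (α.sum + β.sum)) (hCcard : C.card = β.sum)
    (hend : IntervalsEndIn C (blockEnds β C))
    (hendc : IntervalsEndIn (coSet (α.sum + β.sum) C) (blockEnds α (coSet (α.sum + β.sum) C)))
    {s : ℕ} (hs : s ∈ blockEnds β C ∪ blockEnds α (coSet (α.sum + β.sum) C)) :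
    cutPoint α β ((blockEnds β C).image
        (rankIn (blockEnds β C ∪ blockEnds α (coSet (α.sum + β.sum) C))))
      (rankIn (blockEnds β C ∪ blockEnds α (coSet (α.sum + β.sum) C)) s) = s := by
  set N := α.sum + β.sum
  have hCc : (coSet N C).card = α.sum := card_coSet hC hCcard
  have hT := blockEnds_subset hβ hCcard
  have hU := blockEnds_subset hα hCc
  have hC' : rankIn C s = partialSum β (rankIn (blockEnds β C) s) :=
    rankIn_eq_partialSum hβ hCcard hend fun hsC =>
      (mem_union.1 hs).resolve_right fun hsU => (mem_sdiff.1 (hU hsU)).2 hsC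
  have hCc' : rankIn (coSet N C) s = partialSum α (rankIn (blockEnds α (coSet N C)) s) :=
    rankIn_eq_partialSum hα hCc hendc fun hsC =>
      (mem_union.1 hs).resolve_left fun hsT => (mem_sdiff.1 hsC).2 (hT hsT)
  have hsN : s ≤ N := by
    rcases mem_union.1 hs with h | h
    · exact (mem_Icc.1 (hC (hT h))).2
    · exact (mem_Icc.1 (sdiff_subset (hU h))).2
  rw [cutPoint, rankIn_image_rankIn subset_union_left hs,
    rankIn_union (disjoint_sdiff.mono hT hU), Nat.add_sub_cancel_left, ← hC', ← hCc',
    rankIn_add_rankIn_coSet hC hsN]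

lemma cutPoints_image_rankIn_blockEnds (hα : IsComp α) (hβ : IsComp β)
    (hC : C ⊆ Icc 1 (α.sum + β.sum)) (hCcard : C.card = β.sum)
    (hend : IntervalsEndIn C (blockEnds β C))
    (hendc : IntervalsEndIn (coSet (α.sum + β.sum) C) (blockEnds α (coSet (α.sum + β.sum) C))) :
    cutPoints α β ((blockEnds β C).image
        (rankIn (blockEnds β C ∪ blockEnds α (coSet (α.sum + β.sum) C)))) =
      blockEnds β C ∪ blockEnds α (coSet (α.sum + β.sum) C) := by
  set S := blockEnds β C ∪ blockEnds α (coSet (α.sum + β.sum) C)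
  have hT := blockEnds_subset hβ hCcard
  have hU := blockEnds_subset hα (card_coSet hC hCcard)
  have hcard : S.card = α.length + β.length := by
    rw [card_union_of_disjoint (disjoint_sdiff.mono hT hU), card_blockEnds hβ hCcard,
      card_blockEnds hα (card_coSet hC hCcard), Nat.add_comm]
  ext x
  constructor
  · intro hx
    obtain ⟨j, hj, rfl⟩ := mem_image.1 hx
    obtain ⟨hj1, hj2⟩ := mem_Icc.1 hj
    have hmem := nthElt_mem hj1 (hcard ▸ hj2 : j ≤ S.card)
    have := cutPoint_rankIn hα hβ hC hCcard hend hendc hmem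
    rw [rankIn_nthElt hj1 (hcard ▸ hj2)] at this
    exact this ▸ hmem
  · intro hx
    exact mem_image.2 ⟨_, mem_Icc.2 ⟨rankIn_pos hx, hcard ▸ rankIn_le_card⟩,
      cutPoint_rankIn hα hβ hC hCcard hend hendc hx⟩

lemma unPsi_image_rankIn_blockEnds (hα : IsComp α) (hβ : IsComp β)
    (hC : C ⊆ Icc 1 (α.sum + β.sum)) (hCcard : C.card = β.sum)
    (hend : IntervalsEndIn C (blockEnds β C))
    (hendc : IntervalsEndIn (coSet (α.sum + β.sum) C) (blockEnds α (coSet (α.sum + β.sum) C))) :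
    unPsi α β ((blockEnds β C).image
      (rankIn (blockEnds β C ∪ blockEnds α (coSet (α.sum + β.sum) C)))) = C := by
  set T := blockEnds β C
  set U := blockEnds α (coSet (α.sum + β.sum) C)
  have hT : T ⊆ C := blockEnds_subset hβ hCcard
  have hU := blockEnds_subset hα (card_coSet hC hCcard)
  have hmem : ∀ t ∈ T ∪ U, rankIn (T ∪ U) t ∈ T.image (rankIn (T ∪ U)) ↔ t ∈ C := fun t ht =>
    (rankIn_mem_image_rankIn_iff subset_union_left ht).trans
      ⟨fun htT => hT htT, fun htC => (mem_union.1 ht).resolve_right fun htU =>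
        (mem_sdiff.1 (hU htU)).2 htC⟩
  have hiff := fun p => mem_iff_exists_first_mem (S := T ∪ U) (p := p)
    (fun b hb hb1 => subset_union_left (hend b hb hb1))
    (fun b hb hb1 => subset_union_right (hendc b hb hb1))
  ext p
  rw [unPsi, mem_filter, cutPoints_image_rankIn_blockEnds hα hβ hC hCcard hend hendc]
  have hfirst : (∃ t ∈ T ∪ U, rankIn (T ∪ U) t ∈ T.image (rankIn (T ∪ U)) ∧ p ≤ t ∧
      ∀ s ∈ T ∪ U, p ≤ s → t ≤ s) ↔ ∃ t ∈ T ∪ U, t ∈ C ∧ p ≤ t ∧ ∀ s ∈ T ∪ U, p ≤ s → t ≤ s :=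
    exists_congr fun t => and_congr_right fun ht => and_congr_left' (hmem t ht)
  rw [hfirst]
  exact ⟨fun ⟨hp, h⟩ => (hiff p hp).2 h, fun hpC => ⟨hC hpC, (hiff p (hC hpC)).1 hpC⟩⟩

end Reconstruction

section Psi

open Finset

variable {α β : List ℕ} {A C X Y I J : Finset ℕ} {N z : ℕ}

lemma mem_calA {m n : ℕ} :
    A ∈ calA m n I J ↔ (A ⊆ Icc 1 (m + n) ∧ A.card = n) ∧
      ebar (m + n) A \ {zA (m + n) A} ⊆ hashAJ (m + n) A I J := by
  rw [calA, mem_filter, mem_powersetCard]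

lemma max_unbotD_eq_max' (h : C.Nonempty) : C.max.unbotD 0 = C.max' h := by
  rw [← coe_max' h]
  rfl

lemma max'_eq_of_mem (hC : C ⊆ Icc 1 N) (hN : N ∈ C) : C.max' ⟨N, hN⟩ = N :=
  le_antisymm (mem_Icc.1 (hC (max'_mem _ _))).2 (le_max' _ _ hN)

lemma zA_cases (hA : A ⊆ Icc 1 N) (hne : A.Nonempty) (hcne : (coSet N A).Nonempty) :
    (N ∈ A ∧ A.max' hne = N ∧ zA N A = (coSet N A).max' hcne) ∨
      (N ∉ A ∧ (coSet N A).max' hcne = N ∧ zA N A = A.max' hne) := by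
  by_cases hN : N ∈ A
  · exact Or.inl ⟨hN, max'_eq_of_mem hA hN, by rw [zA, if_pos hN, max_unbotD_eq_max' hcne]⟩
  · obtain ⟨x, hx⟩ := hne
    have hNc : N ∈ coSet N A := mem_sdiff.2 ⟨mem_Icc.2 ⟨(mem_Icc.1 (hA hx)).1.trans
      (mem_Icc.1 (hA hx)).2, le_rfl⟩, hN⟩
    exact Or.inr ⟨hN, max'_eq_of_mem sdiff_subset hNc,
      by rw [zA, if_neg hN, max_unbotD_eq_max' ⟨x, hx⟩]⟩

lemma jtilde_eq_insert_max' (hA : A ⊆ Icc 1 N) (hne : A.Nonempty) (hcne : (coSet N A).Nonempty) :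
    Jtilde N A J = insert (A.max' hne) (embedIn A J) := by
  rcases zA_cases hA hne hcne with ⟨hN, hmax, -⟩ | ⟨hN, -, hz⟩
  · rw [Jtilde, if_pos hN, hmax]
  · rw [Jtilde, if_neg hN, hz]

lemma insert_insert_hashAJ (hA : A ⊆ Icc 1 N) (hne : A.Nonempty)
    (hcne : (coSet N A).Nonempty) :
    insert N (insert (zA N A) (hashAJ N A I J)) =
      insert (A.max' hne) (embedIn A J) ∪
        insert ((coSet N A).max' hcne) (embedIn (coSet N A) I) := by
  rcases zA_cases hA hne hcne with ⟨-, hmax, hz⟩ | ⟨-, hmax, hz⟩ <;>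
  · rw [hz, hashAJ, hmax]
    ext
    simp only [mem_insert, mem_union]
    tauto

lemma psi_eq_image_rankIn (hα : IsComp α) (hβ : IsComp β) (hm : α ≠ []) (hn : β ≠ [])
    (hA : A ⊆ Icc 1 (α.sum + β.sum)) (hAcard : A.card = β.sum) :
    Psi α.sum β.sum (setComp α) (setComp β) A =
      (blockEnds β A).image (rankIn (blockEnds β A ∪ blockEnds α (coSet (α.sum + β.sum) A))) := by
  have hCc := card_coSet hA hAcard
  have hne : A.Nonempty := card_pos.1 (hAcard ▸ List.sum_pos β hβ hn)
  have hcne : (coSet _ A).Nonempty := card_pos.1 (hCc ▸ List.sum_pos α hα hm)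
  rw [Psi, stdSet, insert_insert_hashAJ hA hne hcne, jtilde_eq_insert_max' hA hne hcne,
    ← blockEnds_eq_insert hn hne hAcard, ← blockEnds_eq_insert hm hcne hCc]
  rfl

lemma intervalsEndIn_insert_max' (hC : C ⊆ Icc 1 N) (hne : C.Nonempty)
    (hz : z ∈ C → z = C.max' hne) (he : eSet N C \ {z} ⊆ Y ∪ X) (hY : Disjoint C Y) :
    IntervalsEndIn C (insert (C.max' hne) X) := by
  intro b hb hb1
  by_cases hbN : b = N
  · subst hbN
    exact mem_insert.2 (Or.inl (max'_eq_of_mem hC hb).symm)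
  by_cases hbz : b = z
  · exact mem_insert.2 (Or.inl (hbz ▸ hz (hbz ▸ hb)))
  have hbe : b ∈ eSet N C \ {z} :=
    mem_sdiff.2 ⟨mem_erase.2 ⟨hbN, mem_filter.2 ⟨hb, hb1⟩⟩, notMem_singleton.2 hbz⟩
  exact mem_insert_of_mem ((mem_union.1 (he hbe)).resolve_left (disjoint_left.1 hY hb))

lemma intervalsEndIn_blockEnds (hα : IsComp α) (hβ : IsComp β) (hm : α ≠ []) (hn : β ≠ [])
    (hA : A ∈ calA α.sum β.sum (setComp α) (setComp β)) :
    IntervalsEndIn A (blockEnds β A) ∧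
      IntervalsEndIn (coSet (α.sum + β.sum) A) (blockEnds α (coSet (α.sum + β.sum) A)) := by
  obtain ⟨⟨hA, hAcard⟩, he⟩ := mem_calA.1 hA
  set N := α.sum + β.sum
  have hCc := card_coSet hA hAcard
  have hne : A.Nonempty := card_pos.1 (hAcard ▸ List.sum_pos β hβ hn)
  have hcne : (coSet _ A).Nonempty := card_pos.1 (hCc ▸ List.sum_pos α hα hm)
  have hJ : embedIn A (setComp β) ⊆ A :=
    (blockEnds_eq_insert hn hne hAcard ▸ blockEnds_subset hβ hAcard) |>.trans' (subset_insert _ _)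
  have hI : embedIn (coSet _ A) (setComp α) ⊆ coSet _ A :=
    (blockEnds_eq_insert hm hcne hCc ▸ blockEnds_subset hα hCc) |>.trans' (subset_insert _ _)
  rw [blockEnds_eq_insert hn hne hAcard, blockEnds_eq_insert hm hcne hCc]
  have hsub : ∀ C, eSet N C ⊆ ebar N A →
      eSet N C \ {zA N A} ⊆ hashAJ N A (setComp α) (setComp β) :=
    fun C hC => (sdiff_subset_sdiff hC le_rfl).trans he
  constructor
  · refine intervalsEndIn_insert_max' hA hne (fun hz => ?_) (hsub A subset_union_left)
      (disjoint_sdiff.mono_right hI)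
    rcases zA_cases hA hne hcne with ⟨-, -, h⟩ | ⟨-, -, h⟩
    · exact absurd hz (h ▸ (mem_sdiff.1 (max'_mem _ hcne)).2)
    · exact h
  · refine intervalsEndIn_insert_max' sdiff_subset hcne (fun hz => ?_)
      ((hsub _ subset_union_right).trans (union_comm _ _).le) (sdiff_disjoint.mono_right hJ)
    rcases zA_cases hA hne hcne with ⟨-, -, h⟩ | ⟨-, -, h⟩
    · exact h
    · exact absurd (h ▸ max'_mem _ hne) (mem_sdiff.1 hz).2

lemma unPsi_psi (hα : IsComp α) (hβ : IsComp β) (hm : α ≠ []) (hn : β ≠ [])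
    (hA : A ∈ calA α.sum β.sum (setComp α) (setComp β)) :
    unPsi α β (Psi α.sum β.sum (setComp α) (setComp β) A) = A := by
  obtain ⟨⟨hA', hAcard⟩, -⟩ := mem_calA.1 hA
  obtain ⟨hend, hendc⟩ := intervalsEndIn_blockEnds hα hβ hm hn hA
  rw [psi_eq_image_rankIn hα hβ hm hn hA' hAcard]
  exact unPsi_image_rankIn_blockEnds hα hβ hA' hAcard hend hendc

end Psi

/-- the map `Ψ : 𝒜_{α,β} → binom([l+k],k)` is injective. -/
theorem statement1 (α β : List ℕ) (hα : IsComp α) (hβ : IsComp β)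
    (A B : Finset ℕ)
    (hA : A ∈ calA α.sum β.sum (setComp α) (setComp β))
    (hB : B ∈ calA α.sum β.sum (setComp α) (setComp β))
    (h : Psi α.sum β.sum (setComp α) (setComp β) A =
         Psi α.sum β.sum (setComp α) (setComp β) B) :
    A = B := by
  obtain ⟨⟨hA', hAcard⟩, -⟩ := mem_calA.1 hA
  obtain ⟨⟨hB', hBcard⟩, -⟩ := mem_calA.1 hB
  rcases eq_or_ne β [] with rfl | hn
  · rw [Finset.card_eq_zero.1 hAcard, Finset.card_eq_zero.1 hBcard]
  rcases eq_or_ne α [] with rfl | hm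
  · rw [Finset.eq_of_subset_of_card_le hA' (by simp [hAcard]),
      Finset.eq_of_subset_of_card_le hB' (by simp [hBcard])]
  rw [← unPsi_psi hα hβ hm hn hA, h, unPsi_psi hα hβ hm hn hB]

end
end QSymPaper
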